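/- For every w ∈ W there exists a linear hyperplane H in V such that N(w) lies strictly on one side of H and Φ⁺ \ N(w) lies strictly on the other side. -/

import Mathlib

open Pointwise

noncomputable section

/-- The set of nonnegative linear combinations of elements of `X`. -/
def coneOf {V : Type*} [AddCommGroup V] [Module ℝ V] (X : Set V) : Set V :=
  {v | ∃ (n : ℕ) (c : Fin n → ℝ) (f : Fin n → V),
    (∀ i, 0 ≤ c i) ∧ (∀ i, f i ∈ X) ∧ ∑ i, c i • f i = v}

/-- A geometric representation of the Coxeter system `cs` on the real quadratic
space `(V, bil)`: each simple generator acts as the `bil`-reflection in its simple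
root, and the simple roots form a simple system. -/
structure GeomRep {B : Type*} [Fintype B] {W : Type*} [Group W]
    (M : CoxeterMatrix B) (cs : CoxeterSystem M W)
    (V : Type*) [AddCommGroup V] [Module ℝ V] where
  /-- the symmetric bilinear form -/
  bil : LinearMap.BilinForm ℝ V
  bil_symm : ∀ u v : V, bil u v = bil v u
  /-- the representation of `W` by linear automorphisms of `V` -/
  π : W →* (V ≃ₗ[ℝ] V)
  /-- the simple roots -/
  α : B → V
  norm_one : ∀ i, bil (α i) (α i) = 1
  simple_refl : ∀ i v, π (cs.simple i) v = v - (2 * bil (α i) v) • α i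
  pos_indep : ∀ c : B → ℝ, (∀ i, 0 ≤ c i) → ∑ i, c i • α i = 0 → ∀ i, c i = 0
  angle_finite : ∀ i j, i ≠ j → M.M i j ≠ 0 →
    bil (α i) (α j) = - Real.cos (Real.pi / (M.M i j : ℝ))
  angle_infinite : ∀ i j, i ≠ j → M.M i j = 0 → bil (α i) (α j) ≤ -1

namespace GeomRep

variable {B : Type*} [Fintype B] {W : Type*} [Group W]
  {M : CoxeterMatrix B} {cs : CoxeterSystem M W}
  {V : Type*} [AddCommGroup V] [Module ℝ V]

/-- The root system `Φ = W(Δ)`. -/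
def Phi (G : GeomRep M cs V) : Set V := {v | ∃ (w : W) (i : B), G.π w (G.α i) = v}

/-- The positive roots `Φ⁺ = cone(Δ) ∩ Φ`. -/
def PhiPos (G : GeomRep M cs V) : Set V := G.Phi ∩ coneOf (Set.range G.α)

/-- The (left) inversion set `N(w) = Φ⁺ ∩ w(Φ⁻)`. -/
def N (G : GeomRep M cs V) (w : W) : Set V := G.PhiPos ∩ (G.π w '' (-G.PhiPos))

/-- `A ⊆ Φ⁺` is closed if for all `α, β ∈ A`, every root in `cone(α,β)` lies in `A`. -/
def IsClosedSet (G : GeomRep M cs V) (A : Set V) : Prop :=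
  ∀ a ∈ A, ∀ b ∈ A, coneOf {a, b} ∩ G.Phi ⊆ A

/-- `A` is biclosed if `A` and `Φ⁺ \ A` are both closed. -/
def IsBiclosed (G : GeomRep M cs V) (A : Set V) : Prop :=
  G.IsClosedSet A ∧ G.IsClosedSet (G.PhiPos \ A)

/-- `A` is convex if `A = cone(A) ∩ Φ`. -/
def IsConvexSet (G : GeomRep M cs V) (A : Set V) : Prop :=
  A = coneOf A ∩ G.Phi

/-- `A` is biconvex if `A` and `Φ⁺ \ A` are both convex. -/
def IsBiconvex (G : GeomRep M cs V) (A : Set V) : Prop :=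
  G.IsConvexSet A ∧ G.IsConvexSet (G.PhiPos \ A)

/-- `A ⊆ Φ⁺` is separable if `cone(A) ∩ cone(Φ⁺ \ A) = {0}`. -/
def IsSeparable (G : GeomRep M cs V) (A : Set V) : Prop :=
  coneOf A ∩ coneOf (G.PhiPos \ A) = {0}

end GeomRep

/-- The right weak order on a Coxeter group. -/
def WeakLE {B : Type*} {W : Type*} [Group W] {M : CoxeterMatrix B}
    (cs : CoxeterSystem M W) (u w : W) : Prop :=
  cs.length u + cs.length (u⁻¹ * w) = cs.length w

/-!
Choose a linear form `f` that is positive on every simple root: positive independence of `Δ`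
says that the kernel of `c ↦ ∑ cᵢ αᵢ` misses the standard simplex, and separating the two
(Gordan's alternative) provides `f`. Then `ρ := -f ∘ w⁻¹` works, because `w⁻¹`
sends `N(w)` into `-Φ⁺` and `Φ⁺ \ N(w)` into `Φ⁺`, once one knows `Φ = Φ⁺ ∪ -Φ⁺`.

That dichotomy is the classical fact that `ℓ(w sᵢ) > ℓ(w)` forces `w(αᵢ) ∈ cone(Δ)`, proved by
induction on `ℓ(w)`: take a right descent `sⱼ` of `w` and peel off a maximal alternating tail,
`w = v · (⋯ sᵢ sⱼ)` with `ℓ` additive, `sᵢ, sⱼ` both ascents of `v`, and fewer than `mᵢⱼ`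
letters. The tail sends `αᵢ` to a combination of `αᵢ, αⱼ` whose coefficients are Chebyshev
values `sin(kπ/m) / sin(π/m) ≥ 0` (or, for `mᵢⱼ = ∞`, a nondecreasing sequence), and the
induction hypothesis applies to `v(αᵢ)` and `v(αⱼ)`.
-/

theorem exists_linearMap_pos_of_posIndep {ι V : Type*} [Fintype ι] [AddCommGroup V]
    [Module ℝ V] (v : ι → V)
    (hv : ∀ c : ι → ℝ, (∀ i, 0 ≤ c i) → ∑ i, c i • v i = 0 → ∀ i, c i = 0) :
    ∃ f : V →ₗ[ℝ] ℝ, ∀ i, 0 < f (v i) := by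
  classical
  set L := Fintype.linearCombination ℝ v
  have hdisj : Disjoint (stdSimplex ℝ ι) (LinearMap.ker L : Set (ι → ℝ)) := by
    refine Set.disjoint_left.2 fun c hc hcL => ?_
    simpa [hv c hc.1 hcL] using hc.2
  obtain ⟨φ, u, r, hφu, hur, hrφ⟩ := geometric_hahn_banach_compact_closed
    (convex_stdSimplex ℝ ι) (isCompact_stdSimplex ℝ ι) (LinearMap.ker L).convex
    (Submodule.closed_of_finiteDimensional _) hdisj
  -- `φ` is bounded below on the subspace `ker L`, hence vanishes there.
  have hφker : ∀ c ∈ LinearMap.ker L, φ c = 0 := by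
    intro c hc
    by_contra hne
    have := hrφ ((r / φ c) • c) (Submodule.smul_mem _ _ hc)
    rw [map_smul, smul_eq_mul, div_mul_cancel₀ _ hne] at this
    exact lt_irrefl _ this
  have hr : r < 0 := by simpa using hrφ 0 (Submodule.zero_mem _)
  obtain ⟨f, hf⟩ : -(φ : (ι → ℝ) →ₗ[ℝ] ℝ) ∈ LinearMap.range L.dualMap := by
    rw [LinearMap.range_dualMap_eq_dualAnnihilator_ker, Submodule.mem_dualAnnihilator]
    intro c hc
    simp [hφker c hc]
  refine ⟨f, fun i => ?_⟩
  have hfi : f (v i) = -φ (Pi.single i 1) := by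
    simpa [L] using LinearMap.congr_fun hf (Pi.single i 1)
  linarith [hφu _ (single_mem_stdSimplex ℝ i)]

section Cone

variable {V : Type*} [AddCommGroup V] [Module ℝ V] {X : Set V}

theorem subset_coneOf : X ⊆ coneOf X :=
  fun x hx => ⟨1, fun _ => 1, fun _ => x, fun _ => zero_le_one, fun _ => hx, by simp⟩

theorem smul_add_smul_mem_coneOf {a b : ℝ} {x y : V} (ha : 0 ≤ a) (hb : 0 ≤ b)
    (hx : x ∈ coneOf X) (hy : y ∈ coneOf X) : a • x + b • y ∈ coneOf X := by
  obtain ⟨n₁, c₁, f₁, hc₁, hf₁, rfl⟩ := hx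
  obtain ⟨n₂, c₂, f₂, hc₂, hf₂, rfl⟩ := hy
  refine ⟨n₁ + n₂, Fin.append (a • c₁) (b • c₂), Fin.append f₁ f₂, ?_, ?_, ?_⟩
  · refine Fin.addCases (fun l => ?_) (fun l => ?_) <;> simp [mul_nonneg, *]
  · refine Fin.addCases (fun l => ?_) (fun l => ?_) <;> simp [*]
  · simp [Fin.sum_univ_add, Finset.smul_sum, mul_smul]

theorem pos_of_mem_coneOf {f : V →ₗ[ℝ] ℝ} (hf : ∀ x ∈ X, 0 < f x) {v : V}
    (hv : v ∈ coneOf X) (hv0 : v ≠ 0) : 0 < f v := by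
  obtain ⟨n, c, g, hc, hg, rfl⟩ := hv
  have hterm : ∀ l ∈ Finset.univ, 0 ≤ c l * f (g l) :=
    fun l _ => mul_nonneg (hc l) (hf _ (hg l)).le
  simp only [map_sum, map_smul, smul_eq_mul]
  refine (Finset.sum_nonneg hterm).lt_of_ne fun hsum => hv0 ?_
  have hc0 : ∀ l, c l = 0 := fun l =>
    (mul_eq_zero.1 ((Finset.sum_eq_zero_iff_of_nonneg hterm).1 hsum.symm l
      (Finset.mem_univ l))).resolve_right (hf _ (hg l)).ne'
  simp [hc0]

end Cone

/-- `rankTwoCoeff x k` is `U_{k-1}(-x)`, a Chebyshev polynomial of the second kind: the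
coefficients of `s_i s_j s_i ⋯ (α_i)` on `α_i, α_j` are consecutive terms with `x = B(α_i, α_j)`. -/
def rankTwoCoeff (x : ℝ) : ℕ → ℝ
  | 0 => 0
  | 1 => 1
  | (n + 2) => -2 * x * rankTwoCoeff x (n + 1) - rankTwoCoeff x n

@[simp] theorem rankTwoCoeff_zero (x : ℝ) : rankTwoCoeff x 0 = 0 := rfl

@[simp] theorem rankTwoCoeff_one (x : ℝ) : rankTwoCoeff x 1 = 1 := rfl

theorem rankTwoCoeff_add_two (x : ℝ) (n : ℕ) :
    rankTwoCoeff x (n + 2) = -2 * x * rankTwoCoeff x (n + 1) - rankTwoCoeff x n := rfl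

theorem rankTwoCoeff_nonneg_of_le_neg_one {x : ℝ} (hx : x ≤ -1) (k : ℕ) :
    0 ≤ rankTwoCoeff x k := by
  have hmono : ∀ k, 0 ≤ rankTwoCoeff x k ∧ rankTwoCoeff x k ≤ rankTwoCoeff x (k + 1) := by
    intro k
    induction k with
    | zero => simp
    | succ k ih =>
      refine ⟨by linarith, ?_⟩
      rw [rankTwoCoeff_add_two]
      nlinarith
  exact (hmono k).1

theorem rankTwoCoeff_neg_cos_mul_sin (θ : ℝ) (k : ℕ) :
    rankTwoCoeff (-Real.cos θ) k * Real.sin θ = Real.sin (k * θ) := by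
  induction k using Nat.twoStepInduction with
  | zero => simp
  | one => simp
  | more k ih₀ ih₁ =>
    calc rankTwoCoeff (-Real.cos θ) (k + 2) * Real.sin θ
        = 2 * Real.cos θ * (rankTwoCoeff (-Real.cos θ) (k + 1) * Real.sin θ)
          - rankTwoCoeff (-Real.cos θ) k * Real.sin θ := by
          rw [rankTwoCoeff_add_two]; ring
      _ = 2 * Real.cos θ * Real.sin ((k + 1) * θ) - Real.sin (k * θ) := by
          rw [ih₀, ih₁]; push_cast; ring
      _ = Real.sin ((k + 2 : ℕ) * θ) := by
          rw [show ((k + 2 : ℕ) : ℝ) * θ = (k + 1) * θ + θ by push_cast; ring,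
            show (k : ℝ) * θ = (k + 1) * θ - θ by ring, Real.sin_add, Real.sin_sub]
          ring

theorem rankTwoCoeff_neg_cos_pi_div_nonneg {m k : ℕ} (hm : 2 ≤ m) (hk : k ≤ m) :
    0 ≤ rankTwoCoeff (-Real.cos (Real.pi / m)) k := by
  have hm' : (0 : ℝ) < m := by positivity
  have hsin : 0 < Real.sin (Real.pi / m) := by
    apply Real.sin_pos_of_pos_of_lt_pi (by positivity)
    rw [div_lt_iff₀ hm']
    have : (2 : ℝ) ≤ m := by exact_mod_cast hm
    nlinarith [Real.pi_pos]
  have hsin_k : 0 ≤ Real.sin (k * (Real.pi / m)) := by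
    apply Real.sin_nonneg_of_nonneg_of_le_pi (by positivity)
    rw [mul_div_assoc', div_le_iff₀ hm', mul_comm]
    gcongr
  rw [← rankTwoCoeff_neg_cos_mul_sin] at hsin_k
  exact nonneg_of_mul_nonneg_left hsin_k hsin

namespace CoxeterSystem

variable {B : Type*} {W : Type*} [Group W] {M : CoxeterMatrix B} (cs : CoxeterSystem M W)

local prefix:100 "s" => cs.simple
local prefix:100 "π" => cs.wordProd
local prefix:100 "ℓ" => cs.length

theorem length_lt_length_mul_simple_of_reduced {w v : W} {i : B} {ω : List B}
    (hw : w = v * π (i :: ω)) (hlen : ℓ v + ω.length + 1 = ℓ w) : ℓ v < ℓ (v * s i) := by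
  have : ℓ w ≤ ℓ (v * s i) + ω.length := by
    rw [hw, wordProd_cons, ← mul_assoc]
    exact (cs.length_mul_le _ _).trans (by gcongr; exact cs.length_wordProd_le ω)
  rcases cs.length_mul_simple v i with h | h <;> omega

theorem ne_M_of_reduced_of_length_lt_mul_simple {w v : W} {i j : B} {k : ℕ}
    (hw : w = v * π (alternatingWord i j k)) (hlen : ℓ v + k = ℓ w)
    (hwi : ℓ w < ℓ (w * s i)) (hM : M i j ≠ 0) : k ≠ M i j := by
  rintro rfl
  have hbraid : π (alternatingWord i j (M i j)) = π (alternatingWord i j (M i j - 1)) * s i := by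
    rw [cs.prod_alternatingWord_eq_prod_alternatingWord_sub i j _ (by omega),
      show M i j * 2 - M i j = M i j - 1 + 1 by omega, alternatingWord_succ, wordProd_concat]
  have : ℓ (w * s i) ≤ ℓ v + (M i j - 1) := by
    rw [hw, hbraid, mul_assoc, cs.simple_mul_simple_cancel_right]
    refine (cs.length_mul_le _ _).trans ?_
    have := cs.length_wordProd_le (alternatingWord i j (M i j - 1))
    rw [length_alternatingWord] at this
    omega
  omega

theorem exists_alternatingWord_factorization {w : W} {i j : B} (hij : i ≠ j)
    (hwi : ℓ w < ℓ (w * s i)) (hwj : ℓ (w * s j) < ℓ w) :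
    ∃ v k, w = v * π (alternatingWord i j k) ∧ ℓ v < ℓ w ∧ (M i j ≠ 0 → k < M i j) ∧
      ℓ v < ℓ (v * s i) ∧ ℓ v < ℓ (v * s j) := by
  classical
  let P k := ∃ v, w = v * π (alternatingWord i j k) ∧ ℓ v + k = ℓ w ∧ (M i j ≠ 0 → k < M i j)
  have hP1 : P 1 := by
    refine ⟨w * s j, by simp [alternatingWord], ?_, fun hM => ?_⟩
    · rcases cs.length_mul_simple w j with h | h <;> omega
    · have := M.off_diagonal i j hij
      omega
  -- With `k` maximal, the next letter is an ascent of `v` by maximality, the first letter of the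
  -- tail by reducedness; together they are `i` and `j`.
  set k := Nat.findGreatest P (ℓ w)
  have hk1 : 1 ≤ k := Nat.le_findGreatest (by omega) hP1
  obtain ⟨v, hw, hlen, hkM⟩ : P k := Nat.findGreatest_spec (by omega) hP1
  have hnext : ℓ v < ℓ (v * s (if Even k then j else i)) := by
    by_contra! hdesc
    set t := if Even k then j else i
    have hw' : w = v * s t * π (alternatingWord i j (k + 1)) := by
      rw [hw, alternatingWord_succ', wordProd_cons, mul_assoc, cs.simple_mul_simple_cancel_left]
    have hlen' : ℓ (v * s t) + (k + 1) = ℓ w := by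
      rcases cs.length_mul_simple v t with h | h <;> omega
    refine Nat.findGreatest_is_greatest (Nat.lt_succ_self k) (by omega) ⟨v * s t, hw', hlen', ?_⟩
    intro hM
    have := cs.ne_M_of_reduced_of_length_lt_mul_simple hw' hlen' hwi hM
    have := hkM hM
    omega
  clear_value k
  obtain ⟨k', rfl⟩ : ∃ k', k = k' + 1 := ⟨k - 1, by omega⟩
  have hfirst : ℓ v < ℓ (v * s (if Even k' then j else i)) := by
    rw [alternatingWord_succ'] at hw
    exact cs.length_lt_length_mul_simple_of_reduced hw (by rw [length_alternatingWord]; omega)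
  refine ⟨v, k' + 1, hw, by omega, hkM, ?_⟩
  rcases Nat.even_or_odd k' with he | ho
  · rw [if_neg (by simpa [Nat.even_add_one] using he)] at hnext
    rw [if_pos he] at hfirst
    exact ⟨hnext, hfirst⟩
  · rw [if_pos (by simpa [Nat.even_add_one] using ho)] at hnext
    rw [if_neg (by simpa using ho)] at hfirst
    exact ⟨hfirst, hnext⟩

end CoxeterSystem

namespace GeomRep

open CoxeterSystem

variable {B : Type*} [Fintype B] {W : Type*} [Group W]
  {M : CoxeterMatrix B} {cs : CoxeterSystem M W}
  {V : Type*} [AddCommGroup V] [Module ℝ V] (G : GeomRep M cs V)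

theorem π_simple_apply_α (i : B) : G.π (cs.simple i) (G.α i) = -G.α i := by
  rw [G.simple_refl, G.norm_one]
  module

theorem bil_π_apply_π_apply (w : W) (u v : V) :
    G.bil (G.π w u) (G.π w v) = G.bil u v := by
  induction w using cs.simple_induction generalizing u v with
  | simple i =>
    simp only [G.simple_refl, map_sub, map_smul, LinearMap.sub_apply, LinearMap.smul_apply,
      smul_eq_mul, G.norm_one, G.bil_symm u (G.α i)]
    ring
  | one => simp
  | mul w w' hw hw' => simp [hw, hw']

theorem ne_zero_of_mem_Phi {v : V} (hv : v ∈ G.Phi) : v ≠ 0 := by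
  obtain ⟨w, i, rfl⟩ := hv
  intro h
  have := G.bil_π_apply_π_apply w (G.α i) (G.α i)
  simp [h, G.norm_one] at this

theorem π_apply_mem_Phi (w : W) {v : V} (hv : v ∈ G.Phi) : G.π w v ∈ G.Phi := by
  obtain ⟨u, i, rfl⟩ := hv
  exact ⟨w * u, i, by simp⟩

theorem π_alternatingWord_apply_α (i j : B) (k : ℕ) :
    G.π (cs.wordProd (alternatingWord i j k)) (G.α i) =
      rankTwoCoeff (G.bil (G.α i) (G.α j)) (if Even k then k + 1 else k) • G.α i +
      rankTwoCoeff (G.bil (G.α i) (G.α j)) (if Even k then k else k + 1) • G.α j := by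
  induction k with
  | zero => simp [alternatingWord]
  | succ k ih =>
    rw [alternatingWord_succ', wordProd_cons, map_mul, LinearEquiv.mul_apply, ih]
    rcases Nat.even_or_odd k with hk | hk
    · have hk' : ¬Even (k + 1) := by simpa [Nat.even_add_one] using hk
      simp only [hk, hk', if_true, if_false, map_add, map_smul, G.simple_refl,
        G.bil_symm (G.α j) (G.α i), G.norm_one, rankTwoCoeff_add_two]
      module
    · have hk' : Even (k + 1) := by simpa [Nat.even_add_one] using hk
      simp only [Nat.not_even_iff_odd.2 hk, hk', if_true, if_false, map_add, map_smul,
        G.simple_refl, G.norm_one, rankTwoCoeff_add_two]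
      module

theorem rankTwoCoeff_bil_α_nonneg {i j : B} (hij : i ≠ j) {k : ℕ}
    (hk : M i j ≠ 0 → k ≤ M i j) : 0 ≤ rankTwoCoeff (G.bil (G.α i) (G.α j)) k := by
  by_cases hM : M i j = 0
  · exact rankTwoCoeff_nonneg_of_le_neg_one (G.angle_infinite i j hij hM) k
  · rw [G.angle_finite i j hij hM]
    have := M.off_diagonal i j hij
    exact rankTwoCoeff_neg_cos_pi_div_nonneg (by omega) (hk hM)

theorem exists_π_alternatingWord_apply_α_eq {i j : B} (hij : i ≠ j) {k : ℕ}
    (hk : M i j ≠ 0 → k < M i j) :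
    ∃ a b : ℝ, 0 ≤ a ∧ 0 ≤ b ∧
      G.π (cs.wordProd (alternatingWord i j k)) (G.α i) = a • G.α i + b • G.α j := by
  refine ⟨_, _, G.rankTwoCoeff_bil_α_nonneg hij ?_, G.rankTwoCoeff_bil_α_nonneg hij ?_,
    G.π_alternatingWord_apply_α i j k⟩ <;>
  · intro hM
    have := hk hM
    split <;> omega

theorem π_apply_α_mem_coneOf {w : W} {i : B} (hwi : cs.length w < cs.length (w * cs.simple i)) :
    G.π w (G.α i) ∈ coneOf (Set.range G.α) := by
  induction hℓ : cs.length w using Nat.strong_induction_on generalizing w i with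
  | _ n ih =>
  obtain rfl | hw1 := eq_or_ne w 1
  · simpa using subset_coneOf (Set.mem_range_self i)
  obtain ⟨j, hj⟩ := cs.exists_rightDescent_of_ne_one hw1
  have hij : i ≠ j := by
    rintro rfl
    exact absurd hj (by unfold IsRightDescent; omega)
  obtain ⟨v, k, rfl, hv, hk, hvi, hvj⟩ := cs.exists_alternatingWord_factorization hij hwi hj
  obtain ⟨a, b, ha, hb, hab⟩ := G.exists_π_alternatingWord_apply_α_eq hij hk
  rw [map_mul, LinearEquiv.mul_apply, hab, map_add, map_smul, map_smul]
  exact smul_add_smul_mem_coneOf ha hb (ih _ (hℓ ▸ hv) hvi rfl) (ih _ (hℓ ▸ hv) hvj rfl)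

theorem mem_PhiPos_or_neg_mem_PhiPos {v : V} (hv : v ∈ G.Phi) :
    v ∈ G.PhiPos ∨ -v ∈ G.PhiPos := by
  obtain ⟨w, i, rfl⟩ := hv
  rcases cs.length_mul_simple w i with h | h
  · exact .inl ⟨⟨w, i, rfl⟩, G.π_apply_α_mem_coneOf (by omega)⟩
  · have hneg : -G.π w (G.α i) = G.π (w * cs.simple i) (G.α i) := by
      rw [map_mul, LinearEquiv.mul_apply, G.π_simple_apply_α, map_neg]
    refine .inr ⟨hneg ▸ ⟨_, i, rfl⟩, hneg ▸ G.π_apply_α_mem_coneOf ?_⟩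
    rw [cs.simple_mul_simple_cancel_right]
    omega

end GeomRep

/-- For every `w ∈ W` there is a linear hyperplane `H = ker ρ` with
`N(w)` strictly on one side and `Φ⁺ \ N(w)` strictly on the other side. -/
theorem stmt9 {B : Type*} [Fintype B] {W : Type*} [Group W]
    {M : CoxeterMatrix B} {cs : CoxeterSystem M W}
    {V : Type*} [AddCommGroup V] [Module ℝ V] (G : GeomRep M cs V)
    (w : W) : ∃ ρ : V →ₗ[ℝ] ℝ,
      (∀ β ∈ G.N w, 0 < ρ β) ∧ (∀ β ∈ G.PhiPos \ G.N w, ρ β < 0) := by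
  obtain ⟨f, hf⟩ := exists_linearMap_pos_of_posIndep G.α G.pos_indep
  have hfpos : ∀ v ∈ G.PhiPos, 0 < f v := fun v hv =>
    pos_of_mem_coneOf (by rintro _ ⟨i, rfl⟩; exact hf i) hv.2 (G.ne_zero_of_mem_Phi hv.1)
  refine ⟨-f ∘ₗ (G.π w⁻¹ : V →ₗ[ℝ] V), ?_, ?_⟩
  · rintro _ ⟨-, v, hv, rfl⟩
    simpa using hfpos _ hv
  · rintro β ⟨hβ, hβN⟩
    rcases G.mem_PhiPos_or_neg_mem_PhiPos (G.π_apply_mem_Phi w⁻¹ hβ.1) with h | h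
    · simpa using hfpos _ h
    · exact absurd ⟨hβ, _, h, by simp⟩ hβN
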